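/- Let Π be a PARITY_n program with no singleton loops. (i) If x ← B is a rule of Π with head a variable x such that B is consistent and B ∪ {x} (with x added as a rule element) does not fully cover {x_1,…,x_n}, then 'not not x' ∈ B. (ii) If H ← B is a rule of Π such that B is consistent and B ∪ {H} is inconsistent (in particular, this holds whenever H = ⊥), then B fully covers {x_1,…,x_n}. -/
import Mathlib


/-- A rule element: ⊤, ⊥, a variable `x`, `not x`, or `not not x`.
Variables are indexed by natural numbers; the variable `x_i` of the paper is index `i - 1`. -/
inductive RuleElem : Type
  | top : RuleElem
  | bot : RuleElem
  | pos : ℕ → RuleElem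
  | neg : ℕ → RuleElem
  | negneg : ℕ → RuleElem
  deriving DecidableEq

/-- A rule `H ← B`: the head is a variable (`some x`) or ⊥ (`none`);
the body is a finite set of rule elements. -/
structure Rule : Type where
  head : Option ℕ
  body : Finset RuleElem
  deriving DecidableEq

/-- A canonical program is a finite set of rules. -/
abbrev Program : Type := Finset Rule

/-- Satisfaction of a rule element by a set of variables. -/
def satElem (I : Set ℕ) : RuleElem → Prop
  | .top => True
  | .bot => False
  | .pos x => x ∈ I
  | .neg x => x ∉ I
  | .negneg x => x ∈ I

/-- `I ⊨ B`: `I` satisfies every element of the body `B`. -/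
def satBody (I : Set ℕ) (B : Finset RuleElem) : Prop := ∀ e ∈ B, satElem I e

/-- `J` is closed under the program `Π`: for every rule `H ← B` with `J ⊨ B`,
the head is a variable belonging to `J`. -/
def closedUnder (J : Set ℕ) (P : Program) : Prop :=
  ∀ r ∈ P, satBody J r.body → ∃ x, r.head = some x ∧ x ∈ J

/-- `Cn P`: the least set of variables closed under `P` (used for basic programs). -/
def Cn (P : Program) : Set ℕ := ⋂₀ {J : Set ℕ | closedUnder J P}

/-- The reduction of a rule element with respect to `I`. -/
def reduceElem (I : Finset ℕ) : RuleElem → RuleElem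
  | .negneg x => if x ∈ I then .top else .bot
  | .neg x => if x ∈ I then .bot else .top
  | e => e

/-- The reduct `P^I` of a canonical program. -/
def reduct (P : Program) (I : Finset ℕ) : Program :=
  P.image (fun r => ⟨r.head, r.body.image (reduceElem I)⟩)

/-- `I` is an answer set of `P` iff `I = Cn(P^I)`. -/
def isAnswerSet (P : Program) (I : Finset ℕ) : Prop :=
  (I : Set ℕ) = Cn (reduct P I)

/-- The variables occurring in a rule element. -/
def elemVars : RuleElem → Finset ℕ
  | .top => ∅
  | .bot => ∅
  | .pos x => {x}
  | .neg x => {x}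
  | .negneg x => {x}

/-- The variables occurring in a rule. -/
def ruleVars (r : Rule) : Finset ℕ :=
  (r.head.elim ∅ fun x => {x}) ∪ r.body.biUnion elemVars

/-- The variables occurring in a program. -/
def progVars (P : Program) : Finset ℕ := P.biUnion ruleVars

/-- A program is normal if no `not not x` occurs in it. -/
def isNormal (P : Program) : Prop := ∀ r ∈ P, ∀ x, RuleElem.negneg x ∉ r.body

/-- `P` is a PARITY_n program: all its variables are among `{x_1, …, x_n}`
(indices `0, …, n-1`) and its answer sets, as subsets of `{x_1, …, x_n}`,
are exactly the subsets of odd cardinality. -/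
def isParityProgram (n : ℕ) (P : Program) : Prop :=
  progVars P ⊆ Finset.range n ∧
  ∀ I : Finset ℕ, isAnswerSet P I ↔ (I ⊆ Finset.range n ∧ Odd I.card)

/-- `M(Comp(P))`, the models (subsets of `V`) of the completion of `P` over `V`:
for each variable `x ∈ V`, `x` holds iff the body of some rule with head `x` is
(classically) satisfied; and the body of no rule with head ⊥ is satisfied.
(The classical reading of `not` coincides with `satElem`.) -/
def compModels (V : Finset ℕ) (P : Program) : Set (Finset ℕ) :=
  {I | I ⊆ V ∧
    (∀ x ∈ V, (x ∈ I ↔ ∃ r ∈ P, r.head = some x ∧ satBody (↑I) r.body)) ∧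
    ∀ r ∈ P, r.head = none → ¬ satBody (↑I) r.body}

/-- `P` has no singleton loops: no rule `x ← B` with head a variable `x ∈ var(B)`. -/
def noSingletonLoops (P : Program) : Prop :=
  ∀ r ∈ P, ∀ x, r.head = some x → RuleElem.pos x ∉ r.body

/-- `S(B)`: the subsets of the ambient variable set `{x_1, …, x_n}` satisfying `B`. -/
def SB (n : ℕ) (B : Finset RuleElem) : Set (Finset ℕ) :=
  {I | I ⊆ Finset.range n ∧ satBody (↑I) B}

/-- Every rule body of `P` is consistent (w.r.t. the ambient variable set). -/
def allBodiesConsistent (n : ℕ) (P : Program) : Prop :=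
  ∀ r ∈ P, (SB n r.body).Nonempty

/-- A PARITY_n program is standard if it has no singleton loops, every rule body is
consistent, and for every rule `x ← B` with head a variable `x`, if `S(B ∪ {x})` is
a singleton then `not not x ∉ B`. -/
def isStandard (n : ℕ) (P : Program) : Prop :=
  isParityProgram n P ∧ noSingletonLoops P ∧ allBodiesConsistent n P ∧
    ∀ r ∈ P, ∀ x, r.head = some x →
      (∃ I : Finset ℕ, SB n (insert (RuleElem.pos x) r.body) = {I}) →
      RuleElem.negneg x ∉ r.body

/-- `B` covers the variable `x`: `x ∈ B` or `not x ∈ B` or `not not x ∈ B`. -/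
def covers (B : Finset RuleElem) (x : ℕ) : Prop :=
  RuleElem.pos x ∈ B ∨ RuleElem.neg x ∈ B ∨ RuleElem.negneg x ∈ B

/-- `B` fully covers the ambient variable set `{x_1, …, x_n}`. -/
def fullyCovers (n : ℕ) (B : Finset RuleElem) : Prop :=
  ∀ x ∈ Finset.range n, covers B x

/-- The body of a rule together with its head added as a rule element
(`x` for head `x`, `⊥` for head ⊥). -/
def bodyWithHead (r : Rule) : Finset RuleElem :=
  match r.head with
  | some x => insert (RuleElem.pos x) r.body
  | none => insert RuleElem.bot r.body

/-- The coverage set `B ∪ {H}` of a rule: the head contributes coverage of its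
variable when it is a variable, and no coverage when it is ⊥. -/
def headCover (r : Rule) : Finset RuleElem :=
  match r.head with
  | some x => insert (RuleElem.pos x) r.body
  | none => r.body

/-! ### Auxiliary lemmas -/

/-- Flip membership of `y` in `I`. -/
def flipAt (I : Finset ℕ) (y : ℕ) : Finset ℕ :=
  if y ∈ I then I.erase y else insert y I

lemma flipAt_subset {I : Finset ℕ} {n y : ℕ} (hI : I ⊆ Finset.range n)
    (hy : y ∈ Finset.range n) : flipAt I y ⊆ Finset.range n := by
  unfold flipAt
  split
  · exact (Finset.erase_subset _ _).trans hI
  · exact Finset.insert_subset hy hI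

lemma mem_flipAt_of_ne {I : Finset ℕ} {y z : ℕ} (h : z ≠ y) :
    z ∈ flipAt I y ↔ z ∈ I := by
  unfold flipAt
  split
  · exact Finset.mem_erase.trans (by simp [h])
  · simp [h]

lemma notMem_flipAt_self {I : Finset ℕ} {y : ℕ} (h : y ∈ I) : y ∉ flipAt I y := by
  simp [flipAt, h]

lemma odd_or_odd_flipAt (I : Finset ℕ) (y : ℕ) :
    Odd I.card ∨ Odd (flipAt I y).card := by
  rcases Nat.even_or_odd I.card with he | ho
  · right
    unfold flipAt
    by_cases h : y ∈ I
    · rw [if_pos h, Finset.card_erase_of_mem h]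
      have hpos : 0 < I.card := Finset.card_pos.mpr ⟨y, h⟩
      rcases he with ⟨k, hk⟩
      exact ⟨k - 1, by omega⟩
    · rw [if_neg h, Finset.card_insert_of_notMem h]
      rcases he with ⟨k, hk⟩
      exact ⟨k, by omega⟩
  · left; exact ho

lemma satBody_flipAt {I : Finset ℕ} {y : ℕ} {B : Finset RuleElem}
    (hco : ¬ covers B y) (h : satBody (↑I) B) : satBody (↑(flipAt I y)) B := by
  intro e he
  have hy := fun h' => hco h'
  cases e with
  | top => trivial
  | bot => exact h _ he
  | pos z =>
    have hz : z ≠ y := fun hzy => hco (Or.inl (hzy ▸ he))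
    have := h _ he
    simpa [satElem, mem_flipAt_of_ne hz] using this
  | neg z =>
    have hz : z ≠ y := fun hzy => hco (Or.inr (Or.inl (hzy ▸ he)))
    have := h _ he
    simpa [satElem, mem_flipAt_of_ne hz] using this
  | negneg z =>
    have hz : z ≠ y := fun hzy => hco (Or.inr (Or.inr (hzy ▸ he)))
    have := h _ he
    simpa [satElem, mem_flipAt_of_ne hz] using this

lemma satElem_reduce_of_satElem {J : Finset ℕ} {e : RuleElem}
    (h : satElem (↑J) e) : satElem (↑J) (reduceElem J e) := by
  cases e with
  | top => trivial
  | bot => exact h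
  | pos z => exact h
  | neg z =>
    have : z ∉ J := h
    simp [reduceElem, this, satElem]
  | negneg z =>
    have : z ∈ J := h
    simp [reduceElem, this, satElem]

lemma satElem_reduce_mono {I K : Set ℕ} (hIK : I ⊆ K) {J : Finset ℕ} {e : RuleElem}
    (h : satElem I (reduceElem J e)) : satElem K (reduceElem J e) := by
  cases e with
  | top => trivial
  | bot => exact absurd h (by simp [reduceElem, satElem])
  | pos z => exact hIK h
  | neg z =>
    by_cases hz : z ∈ J <;> simp [reduceElem, hz, satElem] at h ⊢
  | negneg z =>
    by_cases hz : z ∈ J <;> simp [reduceElem, hz, satElem] at h ⊢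

/-- Key lemma: an odd subset of `range n` satisfying a body of a rule of a
PARITY_n program must contain the head variable. -/
lemma odd_closed (n : ℕ) (P : Program) (hpar : isParityProgram n P)
    (J : Finset ℕ) (hJ : J ⊆ Finset.range n) (hodd : Odd J.card)
    {r : Rule} (hr : r ∈ P) (hsat : satBody (↑J) r.body) :
    ∃ x, r.head = some x ∧ x ∈ J := by
  have hans : isAnswerSet P J := (hpar.2 J).mpr ⟨hJ, hodd⟩
  set Q := reduct P J with hQ
  have hJCn : (↑J : Set ℕ) = Cn Q := hans
  -- the reduced rule
  set r' : Rule := ⟨r.head, r.body.image (reduceElem J)⟩ with hr'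
  have hr'Q : r' ∈ Q := Finset.mem_image_of_mem _ hr
  have hsat' : satBody (↑J) r'.body := by
    intro e' he'
    rcases Finset.mem_image.mp he' with ⟨e, he, rfl⟩
    exact satElem_reduce_of_satElem (hsat e he)
  -- the family of closed sets is nonempty
  have hne : ∃ K : Set ℕ, closedUnder K Q := by
    by_contra hcon
    push_neg at hcon
    have : Cn Q = Set.univ := by
      unfold Cn
      have : {K : Set ℕ | closedUnder K Q} = ∅ := by
        ext K; simp [hcon K]
      rw [this, Set.sInter_empty]
    have hnJ : n ∈ (↑J : Set ℕ) := by rw [hJCn, this]; trivial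
    have : n ∈ J := hnJ
    have := hJ this
    simp at this
  rcases hne with ⟨K₀, hK₀⟩
  -- every closed K satisfies: ∃ x, r.head = some x ∧ x ∈ K
  have key : ∀ K : Set ℕ, closedUnder K Q → ∃ x, r.head = some x ∧ x ∈ K := by
    intro K hK
    have hsub : Cn Q ⊆ K := Set.sInter_subset_of_mem hK
    have hsubJ : (↑J : Set ℕ) ⊆ K := hJCn ▸ hsub
    have hsatK : satBody K r'.body := by
      intro e' he'
      rcases Finset.mem_image.mp he' with ⟨e, he, rfl⟩
      exact satElem_reduce_mono hsubJ (hsat' _ (Finset.mem_image_of_mem _ he))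
    exact hK r' hr'Q hsatK
  rcases key K₀ hK₀ with ⟨x₀, hx₀, _⟩
  refine ⟨x₀, hx₀, ?_⟩
  have : x₀ ∈ Cn Q := by
    intro K hK
    rcases key K hK with ⟨x, hx, hxK⟩
    rw [hx₀] at hx
    injection hx with h
    exact h ▸ hxK
  rw [show (x₀ ∈ J) = (x₀ ∈ (↑J : Set ℕ)) from rfl, hJCn]
  exact this

/-- Let `P` be a PARITY_n program with no singleton loops.
(i) If `x ← B` is a rule of `P` with `B` consistent and `B ∪ {x}` not fully covering
`{x_1, …, x_n}`, then `not not x ∈ B`.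
(ii) If `H ← B` is a rule of `P` with `B` consistent and `B ∪ {H}` inconsistent
(in particular this holds when `H = ⊥`), then `B` fully covers `{x_1, …, x_n}`. -/
theorem body_coverage (n : ℕ) (P : Program)
    (hpar : isParityProgram n P) (hnsl : noSingletonLoops P) :
    (∀ x : ℕ, ∀ B : Finset RuleElem, (⟨some x, B⟩ : Rule) ∈ P →
      (SB n B).Nonempty → ¬ fullyCovers n (insert (RuleElem.pos x) B) →
      RuleElem.negneg x ∈ B) ∧
    (∀ r ∈ P, (SB n r.body).Nonempty → SB n (bodyWithHead r) = ∅ →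
      fullyCovers n r.body) := by
  constructor
  · -- part (i)
    intro x B hrule ⟨I, hI⟩ hnfc
    by_contra hnn
    -- get an uncovered variable y
    rw [fullyCovers] at hnfc
    push_neg at hnfc
    obtain ⟨y, hy, hyco⟩ := hnfc
    have hycoB : ¬ covers B y := fun h => hyco (by
      rcases h with h | h | h
      · exact Or.inl (Finset.mem_insert_of_mem h)
      · exact Or.inr (Or.inl (Finset.mem_insert_of_mem h))
      · exact Or.inr (Or.inr (Finset.mem_insert_of_mem h)))
    have hyx : y ≠ x := fun h => hyco (Or.inl (by rw [h]; exact Finset.mem_insert_self _ _))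
    obtain ⟨hIr, hIs⟩ := hI
    -- first make x not a member
    have hpos : RuleElem.pos x ∉ B := hnsl _ hrule x rfl
    -- step 1: I₁ ⊨ B, x ∉ I₁, I₁ ⊆ range n
    obtain ⟨I₁, hI₁r, hI₁s, hI₁x⟩ :
        ∃ I₁ : Finset ℕ, I₁ ⊆ Finset.range n ∧ satBody (↑I₁) B ∧ x ∉ I₁ := by
      by_cases hxI : x ∈ I
      · -- B does not cover x: neg x would contradict satisfaction
        have hneg : RuleElem.neg x ∉ B := fun h => (hIs _ h) hxI
        have hxco : ¬ covers B x := by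
          rintro (h | h | h)
          · exact hpos h
          · exact hneg h
          · exact hnn h
        refine ⟨flipAt I x, flipAt_subset hIr (hIr hxI), satBody_flipAt hxco hIs,
          notMem_flipAt_self hxI⟩
      · exact ⟨I, hIr, hIs, hxI⟩
    -- step 2: fix parity using y
    obtain ⟨J, hJr, hJs, hJx, hJodd⟩ :
        ∃ J : Finset ℕ, J ⊆ Finset.range n ∧ satBody (↑J) B ∧ x ∉ J ∧ Odd J.card := by
      rcases odd_or_odd_flipAt I₁ y with ho | ho
      · exact ⟨I₁, hI₁r, hI₁s, hI₁x, ho⟩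
      · refine ⟨flipAt I₁ y, flipAt_subset hI₁r hy, satBody_flipAt hycoB hI₁s, ?_, ho⟩
        rw [mem_flipAt_of_ne (fun h => hyx h.symm)]
        exact hI₁x
    obtain ⟨z, hz, hzJ⟩ := odd_closed n P hpar J hJr hJodd hrule hJs
    have : z = x := by injection hz with h; exact h.symm
    exact hJx (this ▸ hzJ)
  · -- part (ii)
    intro r hr ⟨I, hIr, hIs⟩ hempty
    intro y hy
    by_contra hyco
    obtain ⟨J, hJr, hJs, hJodd⟩ :
        ∃ J : Finset ℕ, J ⊆ Finset.range n ∧ satBody (↑J) r.body ∧ Odd J.card := by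
      rcases odd_or_odd_flipAt I y with ho | ho
      · exact ⟨I, hIr, hIs, ho⟩
      · exact ⟨flipAt I y, flipAt_subset hIr hy, satBody_flipAt hyco hIs, ho⟩
    obtain ⟨x, hx, hxJ⟩ := odd_closed n P hpar J hJr hJodd hr hJs
    have hJmem : J ∈ SB n (bodyWithHead r) := by
      refine ⟨hJr, ?_⟩
      unfold bodyWithHead
      rw [hx]
      intro e he
      rcases Finset.mem_insert.mp he with rfl | he
      · exact hxJ
      · exact hJs e he
    rw [hempty] at hJmem
    exact hJmem
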